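/- arXiv:2010.11759 — 5 statements merged into one kernel-verified Lean document; each statement's English description precedes it below -/
import Mathlib

section
/- For every positive integer n ≥ 3, the integral ∫_1^∞ (sin x / x)^n dx converges absolutely and satisfies 0 ≤ ∫_1^∞ (sin x / x)^n dx ≤ e^{-n/6}. -/
/-!
Since `|sin x / x| ≤ x⁻¹`, the integrand is dominated by `x ^ (-n)`, which gives integrability
and the tail estimate `|∫_a^∞ (sin x / x) ^ n| ≤ a ^ (1 - n) / (n - 1)`.

Nonnegativity: the integrand is nonnegative on `[1, π]` and at least `(2 / π) ^ n` on
`[1, π / 2]` (Jordan's inequality), which outweighs the tail beyond `π`.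

Upper bound: for `x ≥ 1`, `|sin x| ≤ sin 1 + cos 1 * (x - 1) ≤ sin 1 * x`, so the integrand is at
most `(sin 1) ^ n ≤ e ^ (-n / 6)` on `[1, e ^ (1 / 6)]` (numerically `sin 1 * e ^ (1 / 6) ≈ 0.994`),
and the tail beyond `e ^ (1 / 6)` is of the same order.
-/

open Real MeasureTheory Set

lemma abs_sin_div_pow_le_rpow_neg {x : ℝ} (hx : 0 < x) (n : ℕ) :
    |(sin x / x) ^ n| ≤ x ^ (-(n : ℝ)) := by
  rw [abs_pow, rpow_neg hx.le, rpow_natCast, ← inv_pow]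
  gcongr
  rw [abs_div, abs_of_pos hx, div_le_iff₀ hx, inv_mul_cancel₀ hx.ne']
  exact abs_sin_le_one x

lemma intervalIntegrable_sin_div_pow {a b : ℝ} (ha : 0 < a) (hb : 0 < b) (n : ℕ) :
    IntervalIntegrable (fun x => (sin x / x) ^ n) volume a b := by
  refine ContinuousOn.intervalIntegrable ((continuousOn_sin.div continuousOn_id ?_).pow n)
  intro x hx
  exact ((lt_min ha hb).trans_le hx.1).ne'

lemma integrableOn_sin_div_pow_Ioi {a : ℝ} (ha : 0 < a) {n : ℕ} (hn : 2 ≤ n) :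
    IntegrableOn (fun x => (sin x / x) ^ n) (Ioi a) := by
  have hn' : -(n : ℝ) < -1 := by
    have : (2 : ℝ) ≤ n := by exact_mod_cast hn
    linarith
  refine (integrableOn_Ioi_rpow_of_lt hn' ha).mono' ?_ ?_
  · exact ((measurable_sin.div measurable_id).pow_const n).aestronglyMeasurable
  · filter_upwards [ae_restrict_mem measurableSet_Ioi] with x hx
    exact abs_sin_div_pow_le_rpow_neg (ha.trans hx) n

lemma abs_integral_sin_div_pow_Ioi_le {a : ℝ} (ha : 0 < a) {n : ℕ} (hn : 2 ≤ n) :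
    |∫ x in Ioi a, (sin x / x) ^ n| ≤ a⁻¹ ^ n * a / (n - 1) := by
  have hn2 : (2 : ℝ) ≤ n := by exact_mod_cast hn
  have hn' : -(n : ℝ) < -1 := by linarith
  calc |∫ x in Ioi a, (sin x / x) ^ n| ≤ ∫ x in Ioi a, x ^ (-(n : ℝ)) := by
        rw [← Real.norm_eq_abs]
        refine norm_integral_le_of_norm_le (integrableOn_Ioi_rpow_of_lt hn' ha) ?_
        filter_upwards [ae_restrict_mem measurableSet_Ioi] with x hx
        exact abs_sin_div_pow_le_rpow_neg (ha.trans hx) n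
    _ = a⁻¹ ^ n * a / (n - 1) := by
        rw [integral_Ioi_rpow_of_lt hn' ha, rpow_add ha, rpow_one, rpow_neg ha.le, rpow_natCast,
          inv_pow, show -(n : ℝ) + 1 = -(n - 1) by ring, div_neg, neg_div, neg_neg]

lemma mul_two_div_pi_pow_le_intervalIntegral_sin_div_pow (n : ℕ) :
    (π / 2 - 1) * (2 / π) ^ n ≤ ∫ x in (1 : ℝ)..π, (sin x / x) ^ n := by
  have hπ3 := pi_gt_three
  calc (π / 2 - 1) * (2 / π) ^ n = ∫ _ in (1 : ℝ)..(π / 2), (2 / π) ^ n := by simp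
    _ ≤ ∫ x in (1 : ℝ)..(π / 2), (sin x / x) ^ n := by
        refine intervalIntegral.integral_mono_on (by linarith) intervalIntegrable_const
          (intervalIntegrable_sin_div_pow one_pos (by positivity) n) fun x hx => ?_
        have hx0 : 0 < x := by linarith [hx.1]
        refine pow_le_pow_left₀ (by positivity) ?_ n
        rw [le_div_iff₀ hx0]
        exact mul_le_sin hx0.le hx.2
    _ ≤ ∫ x in (1 : ℝ)..π, (sin x / x) ^ n := by
        refine intervalIntegral.integral_mono_interval le_rfl (by linarith) (by linarith) ?_
          (intervalIntegrable_sin_div_pow one_pos pi_pos n)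
        filter_upwards [ae_restrict_mem measurableSet_Ioc] with x hx
        have hx0 : 0 < x := by linarith [hx.1]
        exact pow_nonneg (div_nonneg (sin_nonneg_of_nonneg_of_le_pi hx0.le hx.2) hx0.le) n

lemma integral_sin_div_pow_Ioi_one_nonneg {n : ℕ} (hn : 3 ≤ n) :
    0 ≤ ∫ x in Ioi (1 : ℝ), (sin x / x) ^ n := by
  have hn2 : 2 ≤ n := by omega
  have hπ3 := pi_gt_three
  have hπ4 := pi_lt_four
  have tail_le_head : π⁻¹ ^ n * π / (n - 1) ≤ (π / 2 - 1) * (2 / π) ^ n := calc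
    π⁻¹ ^ n * π / (n - 1) = π⁻¹ ^ n * (π / (n - 1)) := by ring
    _ ≤ π⁻¹ ^ n * ((π / 2 - 1) * 2 ^ 3) := by
        have : (3 : ℝ) ≤ n := by exact_mod_cast hn
        gcongr
        rw [div_le_iff₀ (by linarith)]
        nlinarith
    _ ≤ π⁻¹ ^ n * ((π / 2 - 1) * 2 ^ n) := by
        gcongr
        · linarith
        · norm_num
    _ = (π / 2 - 1) * (2 / π) ^ n := by rw [div_eq_mul_inv 2, mul_pow]; ring
  rw [← intervalIntegral.integral_interval_add_Ioi (integrableOn_sin_div_pow_Ioi one_pos hn2)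
    (integrableOn_sin_div_pow_Ioi pi_pos hn2)]
  linarith [mul_two_div_pi_pow_le_intervalIntegral_sin_div_pow n,
    abs_integral_sin_div_pow_Ioi_le pi_pos hn2, neg_abs_le (∫ x in Ioi π, (sin x / x) ^ n)]

lemma abs_sin_le_sin_one_mul {x : ℝ} (hx : 1 ≤ x) : |sin x| ≤ sin 1 * x := by
  have hcos_le_sin : cos 1 ≤ sin 1 := by
    linarith [cos_one_le, sin_ge_sub_cube zero_le_one]
  have hsin_one : 0 < sin 1 := sin_pos_of_pos_of_le_one one_pos le_rfl
  have hsin : |sin (x - 1)| ≤ x - 1 := abs_sin_le_abs.trans (abs_of_nonneg (by linarith)).le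
  calc |sin x| = |sin 1 * cos (x - 1) + cos 1 * sin (x - 1)| := by
        rw [← sin_add, add_sub_cancel]
    _ ≤ sin 1 * |cos (x - 1)| + cos 1 * |sin (x - 1)| := by
        refine (abs_add_le _ _).trans_eq ?_
        rw [abs_mul, abs_mul, abs_of_pos hsin_one, abs_of_pos cos_one_pos]
    _ ≤ sin 1 * 1 + sin 1 * (x - 1) := by
        gcongr
        exact abs_cos_le_one _
    _ = sin 1 * x := by ring

lemma abs_sin_div_le_sin_one {x : ℝ} (hx : 1 ≤ x) : |sin x / x| ≤ sin 1 := by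
  have hx0 : 0 < x := by linarith
  rw [abs_div, abs_of_pos hx0, div_le_iff₀ hx0]
  exact abs_sin_le_sin_one_mul hx

lemma integral_sin_div_pow_Ioi_one_le {a : ℝ} (ha : 1 ≤ a) (hsin : sin 1 * a ≤ 1) {n : ℕ}
    (hn : 2 ≤ n) :
    ∫ x in Ioi (1 : ℝ), (sin x / x) ^ n ≤ a⁻¹ ^ n * (a - 1 + a / (n - 1)) := by
  have ha0 : 0 < a := by linarith
  have hsin' : sin 1 ≤ a⁻¹ := by
    simpa only [one_div] using (le_div_iff₀ ha0).2 hsin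
  rw [← intervalIntegral.integral_interval_add_Ioi (integrableOn_sin_div_pow_Ioi one_pos hn)
    (integrableOn_sin_div_pow_Ioi ha0 hn)]
  have head : ∫ x in (1 : ℝ)..a, (sin x / x) ^ n ≤ (a - 1) * a⁻¹ ^ n := calc
    ∫ x in (1 : ℝ)..a, (sin x / x) ^ n ≤ ∫ _ in (1 : ℝ)..a, a⁻¹ ^ n := by
        refine intervalIntegral.integral_mono_on ha
          (intervalIntegrable_sin_div_pow one_pos ha0 n) intervalIntegrable_const fun x hx => ?_
        refine (le_abs_self _).trans ?_
        rw [abs_pow]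
        gcongr
        exact (abs_sin_div_le_sin_one hx.1).trans hsin'
    _ = (a - 1) * a⁻¹ ^ n := by simp
  have tail := (le_abs_self _).trans (abs_integral_sin_div_pow_Ioi_le ha0 hn)
  calc _ ≤ (a - 1) * a⁻¹ ^ n + a⁻¹ ^ n * a / (n - 1) := add_le_add head tail
    _ = a⁻¹ ^ n * (a - 1 + a / (n - 1)) := by ring

lemma sin_one_le : sin 1 ≤ 0.8434 := by
  have := (abs_le.1 (sin_bound (x := 1) (by norm_num))).2
  norm_num at this ⊢
  linarith

lemma exp_one_sixth_le : exp (1 / 6) ≤ 1.1825 := by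
  have := (abs_le.1 (exp_bound (x := 1 / 6) (by norm_num [abs_of_pos]) (n := 3) (by norm_num))).2
  norm_num [Finset.sum_range_succ, Nat.factorial] at this ⊢
  linarith

theorem stmt_0 (n : ℕ) (hn : 3 ≤ n) :
    IntegrableOn (fun x : ℝ => (Real.sin x / x) ^ n) (Ioi 1) volume ∧
    0 ≤ ∫ x in Ioi (1 : ℝ), (Real.sin x / x) ^ n ∧
    ∫ x in Ioi (1 : ℝ), (Real.sin x / x) ^ n ≤ Real.exp (-(n : ℝ) / 6) := by
  have hn2 : 2 ≤ n := by omega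
  refine ⟨integrableOn_sin_div_pow_Ioi one_pos hn2, integral_sin_div_pow_Ioi_one_nonneg hn, ?_⟩
  set a := exp (1 / 6)
  have ha : a ≤ 1.1825 := exp_one_sixth_le
  have ha1 : 1 ≤ a := one_le_exp (by norm_num)
  have hsin : sin 1 * a ≤ 1 := by
    nlinarith [sin_one_le, sin_pos_of_pos_of_le_one one_pos le_rfl]
  have hfactor : a - 1 + a / (n - 1) ≤ 1 := by
    have : (3 : ℝ) ≤ n := by exact_mod_cast hn
    have : a / (n - 1) ≤ a / 2 := div_le_div_of_nonneg_left (by linarith) two_pos (by linarith)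
    linarith
  calc ∫ x in Ioi (1 : ℝ), (sin x / x) ^ n ≤ a⁻¹ ^ n * (a - 1 + a / (n - 1)) :=
        integral_sin_div_pow_Ioi_one_le ha1 hsin hn2
    _ ≤ a⁻¹ ^ n * 1 := by gcongr
    _ = exp (-(n : ℝ) / 6) := by
        rw [mul_one, ← exp_neg, ← exp_nat_mul]
        ring_nf
end

section
/- For all real x with 0 < |x| ≤ 1, we have log(sin x / x) ≤ -x²/6. -/
/-!
Writing `t = x² / 6`, the fifth-order Taylor bound for `sin` gives
`sin x / x ≤ 1 - t + x⁴ / 100`, and for `0 ≤ t ≤ 1/6` this is at most the alternating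
third-order Taylor polynomial `1 - t + t² / 2 - t³ / 6`, which lies below `exp (-t)`.
-/

open Real Set

theorem abs_sin_div_self_sub_le {x : ℝ} (hx0 : x ≠ 0) (hx1 : |x| ≤ 1) :
    |sin x / x - (1 - x ^ 2 / 6)| ≤ x ^ 4 / 100 := by
  have hdiv : sin x / x - (1 - x ^ 2 / 6) = (sin x - (x - x ^ 3 / 6)) / x := by
    field_simp
  rw [hdiv, abs_div, div_le_iff₀ (abs_pos.mpr hx0)]
  calc |sin x - (x - x ^ 3 / 6)| ≤ |x| ^ 5 / 100 := sin_bound hx1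
    _ = |x ^ 4| / 100 * |x| := by rw [abs_pow]; ring
    _ = x ^ 4 / 100 * |x| := by rw [abs_of_nonneg (by positivity)]

theorem one_sub_add_sq_div_two_sub_cube_div_six_le_exp_neg {t : ℝ} (ht : 0 ≤ t) :
    1 - t + t ^ 2 / 2 - t ^ 3 / 6 ≤ exp (-t) := by
  -- Multiplied by `exp t`, the claim reads `g t ≤ g 0`, and `g` is antitone on `[0, ∞)`.
  set g : ℝ → ℝ := fun s ↦ exp s * (1 - s + s ^ 2 / 2 - s ^ 3 / 6)
  have hg : ∀ s, HasDerivAt g (-(exp s * s ^ 3 / 6)) s := fun s ↦ by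
    have hp : HasDerivAt (fun s ↦ 1 - s + s ^ 2 / 2 - s ^ 3 / 6) (-1 + s - s ^ 2 / 2) s :=
      ((((hasDerivAt_id s).const_sub 1).add ((hasDerivAt_pow 2 s).div_const 2)).sub
        ((hasDerivAt_pow 3 s).div_const 6)).congr_deriv (by norm_num; ring)
    exact ((hasDerivAt_exp s).mul hp).congr_deriv (by ring)
  have hanti : AntitoneOn g (Ici 0) :=
    antitoneOn_of_deriv_nonpos (convex_Ici 0) (fun s _ ↦ (hg s).continuousAt.continuousWithinAt)
      (fun s _ ↦ (hg s).differentiableAt.differentiableWithinAt) fun s hs ↦ by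
        rw [interior_Ici] at hs
        have hs0 : 0 < s := hs
        rw [(hg s).deriv, neg_nonpos]
        positivity
  have h := hanti self_mem_Ici ht ht
  simp only [g, exp_zero] at h
  rw [← mul_le_mul_iff_of_pos_left (exp_pos t), ← exp_add, add_neg_cancel, exp_zero]
  simpa using h

theorem stmt_1 (x : ℝ) (hx0 : 0 < |x|) (hx1 : |x| ≤ 1) :
    Real.log (Real.sin x / x) ≤ -x ^ 2 / 6 := by
  have hsq : x ^ 2 ≤ 1 := (sq_le_one_iff_abs_le_one x).mpr hx1
  obtain ⟨hlow, hupp⟩ := abs_le.mp (abs_sin_div_self_sub_le (abs_pos.mp hx0) hx1)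
  have hpos : 0 < sin x / x := by nlinarith [sq_nonneg x]
  rw [log_le_iff_le_exp hpos, neg_div]
  calc sin x / x ≤ 1 - x ^ 2 / 6 + x ^ 4 / 100 := by linarith
    _ ≤ 1 - x ^ 2 / 6 + (x ^ 2 / 6) ^ 2 / 2 - (x ^ 2 / 6) ^ 3 / 6 := by
      nlinarith [pow_nonneg (sq_nonneg x) 2]
    _ ≤ exp (-(x ^ 2 / 6)) := one_sub_add_sq_div_two_sub_cube_div_six_le_exp_neg (by positivity)
end

section
/- For all real x with 0 < |x| ≤ 1, (sin x / x)^n ≤ exp(-n x² / 6) for every positive integer n. -/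
/-! Bounding the Taylor remainders with `Real.sin_bound` and `Real.exp_bound`, for `|x| ≤ 1`
one gets `sinc x ≤ 1 - x²/6 + x⁴/100 ≤ exp (-x²/6)`, the last step because the second-order
term of `exp (-x²/6)` is `x⁴/72`. The same estimate shows `sinc x > 0`, so the bound survives
taking `n`-th powers. -/

namespace Real

variable {x : ℝ}

lemma abs_sinc_sub_one_sub_sq_div_six_le (hx : |x| ≤ 1) :
    |sinc x - (1 - x ^ 2 / 6)| ≤ x ^ 4 / 100 := by
  rcases eq_or_ne x 0 with rfl | hx0
  · simp
  have hdiv : sinc x - (1 - x ^ 2 / 6) = (sin x - (x - x ^ 3 / 6)) / x := by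
    rw [sinc_of_ne_zero hx0]; field_simp
  rw [hdiv, abs_div, div_le_iff₀ (abs_pos.mpr hx0), ← (by decide : Even 4).pow_abs]
  calc |sin x - (x - x ^ 3 / 6)| ≤ |x| ^ 5 / 100 := sin_bound hx
    _ = |x| ^ 4 / 100 * |x| := by ring

lemma sinc_pos_of_abs_le_one (hx : |x| ≤ 1) : 0 < sinc x := by
  have hsinc := abs_le.mp (abs_sinc_sub_one_sub_sq_div_six_le hx)
  have hx2 : x ^ 2 ≤ 1 := sq_le_one_iff_abs_le_one x |>.mpr hx
  nlinarith [sq_nonneg x]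

lemma one_sub_add_sq_div_two_sub_le_exp_neg {u : ℝ} (hu : |u| ≤ 1) :
    1 - u + u ^ 2 / 2 - |u| ^ 3 * (2 / 9) ≤ exp (-u) := by
  have := (abs_le.mp (exp_bound (x := -u) (by rwa [abs_neg]) (n := 3) (by norm_num))).1
  simp only [Finset.sum_range_succ, Finset.sum_range_zero, Nat.factorial, abs_neg] at this
  norm_num at this
  linarith

lemma sinc_le_exp_neg_sq_div_six (hx : |x| ≤ 1) : sinc x ≤ exp (-(x ^ 2) / 6) := by
  have hx2 : x ^ 2 ≤ 1 := sq_le_one_iff_abs_le_one x |>.mpr hx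
  have hu : |x ^ 2 / 6| = x ^ 2 / 6 := abs_of_nonneg (by positivity)
  have hexp := one_sub_add_sq_div_two_sub_le_exp_neg (u := x ^ 2 / 6) (by rw [hu]; linarith)
  have hsinc := abs_le.mp (abs_sinc_sub_one_sub_sq_div_six_le hx)
  rw [hu, ← neg_div] at hexp
  nlinarith [sq_nonneg x, pow_nonneg (sq_nonneg x) 2]

end Real

theorem stmt_2_general (x : ℝ) (hx0 : 0 < |x|) (hx1 : |x| ≤ 1) (n : ℕ) :
    (Real.sin x / x) ^ n ≤ Real.exp (-(n : ℝ) * x ^ 2 / 6) := by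
  rw [← Real.sinc_of_ne_zero (abs_pos.mp hx0)]
  calc Real.sinc x ^ n ≤ Real.exp (-(x ^ 2) / 6) ^ n :=
        pow_le_pow_left₀ (Real.sinc_pos_of_abs_le_one hx1).le
          (Real.sinc_le_exp_neg_sq_div_six hx1) n
    _ = Real.exp (-(n : ℝ) * x ^ 2 / 6) := by rw [← Real.exp_nat_mul]; ring_nf

theorem stmt_2 (x : ℝ) (hx0 : 0 < |x|) (hx1 : |x| ≤ 1) (n : ℕ) (hn : 0 < n) :
    (Real.sin x / x) ^ n ≤ Real.exp (-(n : ℝ) * x ^ 2 / 6) :=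
  stmt_2_general x hx0 hx1 n
end

section
/- For every odd integer n ≥ 3 and every integer k ≥ 0, ∫_{2kπ + π/2}^{2(k+1)π + π/2} (sin x / x)^n dx ≥ 0. -/
open Real Set intervalIntegral MeasureTheory

/-!
Put `a = 2kπ + π/2`. Folding `[a, a + 2π]` twice about its midpoints gathers the integrand at the
four points `x ≤ 2a + π - x ≤ x + π ≤ 2a + 2π - x`, for `x ∈ [a, a + π/2]`, where `sin` takes the
values `s, -s, -s, s` with `s = sin x ≥ 0`. For odd `n` the four terms add up to
`sⁿ (φ x - φ (x + d) - φ y + φ (y + d))` with `φ t = t⁻ⁿ`, `y = 2a + π - x` and `d = π`, which is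
nonnegative because the increments of the convex function `φ` increase.
-/

theorem ConvexOn.map_add_add_le_map_add_map_add {s : Set ℝ} {f : ℝ → ℝ} (hf : ConvexOn ℝ s f)
    {x y d : ℝ} (hx : x ∈ s) (hyd : y + d ∈ s) (hxy : x ≤ y) (hd : 0 ≤ d) :
    f (x + d) + f y ≤ f x + f (y + d) := by
  rcases hd.eq_or_lt with rfl | hd
  · simp only [add_zero, le_refl]
  have hmem : ∀ t ∈ Icc x (y + d), t ∈ s := fun t ht => hf.1.ordConnected.out hx hyd ht
  have hslope : (f (x + d) - f x) / d ≤ (f (y + d) - f y) / d :=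
    calc (f (x + d) - f x) / d = (f (x + d) - f x) / (x + d - x) := by rw [add_sub_cancel_left]
      _ ≤ (f (y + d) - f x) / (y + d - x) :=
        hf.secant_mono hx (hmem _ ⟨by linarith, by linarith⟩) hyd (by linarith) (by linarith)
          (by linarith)
      _ = (f x - f (y + d)) / (x - (y + d)) := by rw [← neg_div_neg_eq, neg_sub, neg_sub]
      _ ≤ (f y - f (y + d)) / (y - (y + d)) :=
        hf.secant_mono hyd hx (hmem _ ⟨hxy, by linarith⟩) (by linarith) (by linarith) hxy
      _ = (f (y + d) - f y) / d := by rw [← neg_div_neg_eq, neg_sub, neg_sub, add_sub_cancel_left]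
  linarith [(div_le_div_iff_of_pos_right hd).1 hslope]

theorem integral_eq_integral_add_reflect {E : Type*} [NormedAddCommGroup E] [NormedSpace ℝ E]
    {f : ℝ → E} {a b : ℝ} (hf : IntervalIntegrable f volume a b) :
    ∫ x in a..b, f x = ∫ x in a..(a + b) / 2, (f x + f (a + b - x)) := by
  have hm : (a + b) / 2 ∈ uIcc a b := by
    rcases le_total a b with h | h
    · exact mem_uIcc.2 (Or.inl ⟨by linarith, by linarith⟩)
    · exact mem_uIcc.2 (Or.inr ⟨by linarith, by linarith⟩)
  have h₁ : IntervalIntegrable f volume a ((a + b) / 2) := hf.mono_set (uIcc_subset_uIcc_left hm)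
  have h₂ : IntervalIntegrable f volume ((a + b) / 2) b := hf.mono_set (uIcc_subset_uIcc_right hm)
  have h₂' := h₂.comp_sub_left (a + b)
  rw [show a + b - (a + b) / 2 = (a + b) / 2 by ring, add_sub_cancel_right] at h₂'
  rw [integral_add h₁ h₂'.symm, integral_comp_sub_left, add_sub_cancel_left,
    show a + b - (a + b) / 2 = (a + b) / 2 by ring, integral_add_adjacent_intervals h₁ h₂]

theorem ContinuousOn.add_comp_reflect {E : Type*} [TopologicalSpace E] [AddCommMonoid E]
    [ContinuousAdd E] {f : ℝ → E} {a b : ℝ} (hf : ContinuousOn f (Icc a b)) :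
    ContinuousOn (fun x => f x + f (a + b - x)) (Icc a ((a + b) / 2)) := by
  refine (hf.mono fun x hx => ?_).add
    (hf.comp (continuous_const.sub continuous_id).continuousOn fun x hx => ?_) <;>
  · simp only [mem_Icc] at hx ⊢
    constructor <;> linarith

theorem pow_div_four_point_nonneg_of_odd {n : ℕ} (hodd : Odd n) {s x y d : ℝ} (hs : 0 ≤ s)
    (hx : 0 < x) (hxy : x ≤ y) (hd : 0 ≤ d) :
    0 ≤ (s / x) ^ n + (-s / (x + d)) ^ n + (-s / y) ^ n + (s / (y + d)) ^ n := by
  have hconv : ConvexOn ℝ (Ioi 0) fun t : ℝ => (t ^ n)⁻¹ := by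
    simpa only [zpow_neg, zpow_natCast] using convexOn_zpow (𝕜 := ℝ) (-n)
  have key := hconv.map_add_add_le_map_add_map_add hx (show 0 < y + d by linarith) hxy hd
  have hexpand : (s / x) ^ n + (-s / (x + d)) ^ n + (-s / y) ^ n + (s / (y + d)) ^ n
      = s ^ n * ((x ^ n)⁻¹ + ((y + d) ^ n)⁻¹ - (((x + d) ^ n)⁻¹ + (y ^ n)⁻¹)) := by
    rw [neg_div, neg_div, hodd.neg_pow, hodd.neg_pow]
    ring
  rw [hexpand]
  exact mul_nonneg (pow_nonneg hs n) (sub_nonneg.2 key)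

theorem stmt_17_general (n : ℕ) (hodd : Odd n) (k : ℕ) :
    0 ≤ ∫ x in (2 * k * π + π / 2)..(2 * (k + 1) * π + π / 2), (Real.sin x / x) ^ n := by
  rw [show 2 * ((k : ℝ) + 1) * π + π / 2 = 2 * k * π + π / 2 + 2 * π by ring]
  set a : ℝ := 2 * k * π + π / 2
  have ha0 : 0 < a := by positivity
  have hsin : ∀ y, sin (a + a + y) = -sin y := fun y => by
    rw [show a + a + y = y + π + (2 * k : ℕ) * (2 * π) by push_cast; ring,
      sin_add_nat_mul_two_pi, sin_add_pi]
  have hg : ContinuousOn (fun x => (sin x / x) ^ n) (Icc a (a + 2 * π)) :=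
    (continuous_sin.continuousOn.div continuousOn_id fun x hx => (ha0.trans_le hx.1).ne').pow n
  have hG := hg.add_comp_reflect
  rw [show (a + (a + 2 * π)) / 2 = a + π by ring] at hG
  rw [integral_eq_integral_add_reflect (hg.intervalIntegrable_of_Icc (by linarith [pi_pos])),
    show (a + (a + 2 * π)) / 2 = a + π by ring,
    integral_eq_integral_add_reflect (hG.intervalIntegrable_of_Icc (by linarith [pi_pos])),
    show (a + (a + π)) / 2 = a + π / 2 by ring]
  refine integral_nonneg (by linarith [pi_pos]) fun x hx => ?_
  have hs : 0 ≤ sin x := by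
    rw [show x = x - a + π / 2 + (k : ℕ) * (2 * π) by ring, sin_add_nat_mul_two_pi,
      sin_add_pi_div_two]
    exact cos_nonneg_of_mem_Icc ⟨by linarith [hx.1, pi_pos], by linarith [hx.2]⟩
  have key := pow_div_four_point_nonneg_of_odd hodd hs (ha0.trans_le hx.1)
    (y := a + a + (π - x)) (d := π) (by linarith [hx.2]) pi_pos.le
  rw [show a + a + (π - x) + π = a + a + (2 * π - x) by ring] at key
  rw [show a + (a + 2 * π) - x = a + a + (2 * π - x) by ring,
    show a + (a + π) - x = a + a + (π - x) by ring,
    show a + (a + 2 * π) - (a + a + (π - x)) = x + π by ring]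
  simp only [hsin, sin_two_pi_sub, sin_pi_sub, sin_add_pi, neg_neg]
  linarith

theorem stmt_17 (n : ℕ) (hodd : Odd n) (hn : 3 ≤ n) (k : ℕ) :
    0 ≤ ∫ x in (2 * k * π + π / 2)..(2 * (k + 1) * π + π / 2), (Real.sin x / x) ^ n :=
  stmt_17_general n hodd k
end

section
/- For every positive integer n and real x with 0 < x ≤ π/2, 0 ≥ log(sin x / x) − P(x) ≥ −1.4·10^{−12} x^{22}, where P(x) = Σ_{k=1}^{10} a_{2k} x^{2k} is the degree-20 Taylor polynomial of log(sin x / x) at 0 (only even terms occur). -/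
/-!
Euler's product `sin (π u) = π u ∏ (1 - u² / j²)` gives
`log (sin (π u) / (π u)) = ∑ log (1 - u² / j²)`. Expanding every logarithm and interchanging the
resulting double series of nonnegative terms yields
`log (sin x / x) = -∑_{n ≥ 1} ζ(2n) / n · (x / π) ^ (2n)` for `|x| < π`, so by uniqueness of power
series coefficients `a (2n) = -ζ(2n) / (n π^(2n))`. All terms of the series are nonpositive, which
gives the upper bound. Since `ζ(2n) ≤ 1 + 2^(2-2n)`, for `x ≤ π / 2` the remainder after `n = 10`
is at most `(1 + 2^(-20)) (x / π)^22 ∑ᵢ 4^(-i) / (11 + i)`, and the last sum is at most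
`1/11 + 1/36 = 47/396`.
-/

open Real Finset

noncomputable def zetaNat (s : ℕ) : ℝ := ∑' j : ℕ, 1 / ((j : ℝ) + 1) ^ s

lemma summable_one_div_succ_pow {s : ℕ} (hs : 2 ≤ s) :
    Summable fun j : ℕ => 1 / ((j : ℝ) + 1) ^ s := by
  simpa using (summable_nat_add_iff 1).2 (summable_one_div_nat_pow.2 (by omega : 1 < s))

lemma zetaNat_nonneg (s : ℕ) : 0 ≤ zetaNat s :=
  tsum_nonneg fun _ => by positivity

lemma hasSum_one_div_add_two_sq : HasSum (fun j : ℕ => 1 / ((j : ℝ) + 2) ^ 2) (π ^ 2 / 6 - 1) := by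
  have h := (hasSum_nat_add_iff' 2).2 hasSum_zeta_two
  norm_num [sum_range_succ] at h
  simpa only [one_div] using h

lemma zetaNat_le {s : ℕ} (hs : 2 ≤ s) : zetaNat s ≤ 1 + (1 / 2) ^ (s - 2) := by
  have htail : HasSum (fun j : ℕ => 1 / ((j : ℝ) + 2) ^ s) (zetaNat s - 1) := by
    have h := (hasSum_nat_add_iff' 1).2 (summable_one_div_succ_pow hs).hasSum
    norm_num [add_assoc] at h
    simpa only [one_div, zetaNat] using h
  have hterm : ∀ j : ℕ, 1 / ((j : ℝ) + 2) ^ s ≤ (1 / 2) ^ (s - 2) * (1 / ((j : ℝ) + 2) ^ 2) := by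
    intro j
    have hj : (2 : ℝ) ≤ j + 2 := by linarith [j.cast_nonneg (α := ℝ)]
    obtain ⟨r, rfl⟩ := Nat.exists_eq_add_of_le' hs
    rw [Nat.add_sub_cancel, pow_add, one_div_pow, ← one_div_mul_one_div]
    gcongr
  have hle := hasSum_le hterm htail (hasSum_one_div_add_two_sq.mul_left _)
  have hζ2 : π ^ 2 / 6 - 1 ≤ 1 := by nlinarith [pi_lt_d2, pi_pos]
  nlinarith [pow_pos (by norm_num : (0 : ℝ) < 1 / 2) (s - 2)]

lemma hasSum_log_one_sub_sq_div_sq {u : ℝ} (hu0 : u ≠ 0) (hu : |u| < 1) :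
    HasSum (fun j : ℕ => log (1 - u ^ 2 / ((j : ℝ) + 1) ^ 2)) (log (sin (π * u) / (π * u))) := by
  have hfactor : ∀ j : ℕ, 0 < 1 - u ^ 2 / ((j : ℝ) + 1) ^ 2 := fun j => by
    have : u ^ 2 < ((j : ℝ) + 1) ^ 2 := by
      rw [← sq_abs]; gcongr; linarith [j.cast_nonneg (α := ℝ)]
    rw [sub_pos, div_lt_one (by positivity)]; exact this
  have hπu : π * u ≠ 0 := mul_ne_zero pi_ne_zero hu0
  have hsin : sin (π * u) ≠ 0 := by
    have := abs_lt.1 hu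
    rw [Ne, sin_eq_zero_iff_of_lt_of_lt (by nlinarith [pi_pos]) (by nlinarith [pi_pos])]
    exact hπu
  have hpartial : ∀ n, ∑ j ∈ range n, log (1 - u ^ 2 / ((j : ℝ) + 1) ^ 2) =
      log (π * u * ∏ j ∈ range n, (1 - u ^ 2 / ((j : ℝ) + 1) ^ 2)) - log (π * u) := fun n => by
    rw [log_mul hπu (prod_ne_zero_iff.2 fun j _ => (hfactor j).ne'),
      log_prod fun j _ => (hfactor j).ne', add_sub_cancel_left]
  have hlim := ((tendsto_euler_sin_prod u).log hsin).sub_const (log (π * u))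
  rw [← log_div hsin hπu] at hlim
  simp_rw [← hpartial] at hlim
  have hneg : HasSum (fun j : ℕ => -log (1 - u ^ 2 / ((j : ℝ) + 1) ^ 2))
      (-log (sin (π * u) / (π * u))) := by
    rw [hasSum_iff_tendsto_nat_of_nonneg]
    · simpa only [sum_neg_distrib] using hlim.neg
    · exact fun j => neg_nonneg.2 (log_nonpos (hfactor j).le (by
        linarith [div_nonneg (sq_nonneg u) (sq_nonneg ((j : ℝ) + 1))]))
  simpa using hneg.neg

lemma hasSum_tsum_pow_div_of_hasSum_log {t : ℕ → ℝ} {L : ℝ} (h0 : ∀ j, 0 ≤ t j)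
    (h1 : ∀ j, t j < 1) (hL : HasSum (fun j => log (1 - t j)) L) :
    HasSum (fun m : ℕ => ∑' j, t j ^ (m + 1) / (m + 1)) (-L) := by
  set F : ℕ × ℕ → ℝ := fun p => t p.1 ^ (p.2 + 1) / (p.2 + 1)
  have hrow : ∀ j, HasSum (fun m => F (j, m)) (-log (1 - t j)) := fun j =>
    hasSum_pow_div_log_of_abs_lt_one ((abs_lt.2 ⟨by linarith [h0 j], h1 j⟩))
  have hF : Summable F := by
    refine (summable_prod_of_nonneg fun p => by positivity [h0 p.1]).2
      ⟨fun j => (hrow j).summable, ?_⟩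
    simpa only [(hrow _).tsum_eq] using hL.summable.neg
  have hFsum : HasSum F (-L) := by
    convert hF.hasSum
    exact (hF.hasSum.prod_fiberwise hrow).unique hL.neg |>.symm
  exact ((Equiv.prodComm ℕ ℕ).hasSum_iff.2 hFsum).prod_fiberwise fun m =>
    (hF.prod_symm.prod_factor m).hasSum

lemma tsum_sq_div_sq_pow_div (u : ℝ) (m : ℕ) :
    ∑' j : ℕ, (u ^ 2 / ((j : ℝ) + 1) ^ 2) ^ (m + 1) / (m + 1) =
      zetaNat (2 * (m + 1)) / (m + 1) * u ^ (2 * (m + 1)) := by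
  rw [zetaNat, ← tsum_div_const, ← tsum_mul_right]
  congr 1 with j
  rw [div_pow, ← pow_mul, ← pow_mul]
  ring

lemma hasSum_log_sin_pi_mul_div {u : ℝ} (hu : |u| < 1) :
    HasSum (fun m : ℕ => -(zetaNat (2 * (m + 1)) / (m + 1)) * u ^ (2 * (m + 1)))
      (log (sin (π * u) / (π * u))) := by
  rcases eq_or_ne u 0 with rfl | hu0
  · simp
  have hsq : ∀ j : ℕ, u ^ 2 / ((j : ℝ) + 1) ^ 2 < 1 := fun j => by
    rw [div_lt_one (by positivity), ← sq_abs]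
    nlinarith [abs_nonneg u, j.cast_nonneg (α := ℝ)]
  have h := hasSum_tsum_pow_div_of_hasSum_log (fun j => by positivity) hsq
    (hasSum_log_one_sub_sq_div_sq hu0 hu)
  simpa only [tsum_sq_div_sq_pow_div, neg_neg, neg_mul] using h.neg

-- The value at `k = 0` is `0` only because division by zero is zero.
noncomputable def logSincCoeff (k : ℕ) : ℝ :=
  if Even k then -(2 * zetaNat k / (k * π ^ k)) else 0

lemma logSincCoeff_two_mul_succ_mul_pow (m : ℕ) (x : ℝ) :
    logSincCoeff (2 * (m + 1)) * x ^ (2 * (m + 1)) =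
      -(zetaNat (2 * (m + 1)) / (m + 1)) * (x / π) ^ (2 * (m + 1)) := by
  rw [logSincCoeff, if_pos (even_two_mul _), div_pow]
  push_cast
  field_simp

lemma hasSum_logSincCoeff {x : ℝ} (hx : |x| < π) :
    HasSum (fun k => logSincCoeff k * x ^ k) (log (sin x / x)) := by
  have hu : |x / π| < 1 := by rwa [abs_div, abs_of_pos pi_pos, div_lt_one pi_pos]
  have h := hasSum_log_sin_pi_mul_div hu
  rw [mul_div_cancel₀ x pi_ne_zero] at h
  have hinj : Function.Injective fun m : ℕ => 2 * (m + 1) := fun m n hmn => by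
    simp only at hmn; omega
  refine (hinj.hasSum_iff fun k hk => ?_).1 ?_
  · have : ¬Even k ∨ k = 0 := by
      contrapose! hk
      obtain ⟨⟨r, rfl⟩, hr⟩ := hk
      exact ⟨r - 1, by dsimp only; omega⟩
    rcases this with hodd | rfl
    · simp [logSincCoeff, hodd]
    · simp [logSincCoeff]
  · simpa only [Function.comp_def, logSincCoeff_two_mul_succ_mul_pow] using h

lemma eq_of_forall_hasSum_mul_pow {𝕜 : Type*} [NontriviallyNormedField 𝕜] {c d : ℕ → 𝕜}
    {f : 𝕜 → 𝕜} {r : ℝ} (hr : 0 < r) (hc : ∀ x : 𝕜, ‖x‖ < r → HasSum (fun k => c k * x ^ k) (f x))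
    (hd : ∀ x : 𝕜, ‖x‖ < r → HasSum (fun k => d k * x ^ k) (f x)) : c = d := by
  have hzero : ∀ x : 𝕜, ‖x‖ < r → HasSum (fun k => (c - d) k * x ^ k) 0 := fun x hx => by
    simpa only [Pi.sub_apply, sub_mul, sub_self] using (hc x hx).sub (hd x hx)
  set p := FormalMultilinearSeries.ofScalars 𝕜 (c - d)
  obtain ⟨x₀, hx₀, hx₀r⟩ := NormedField.exists_norm_lt 𝕜 hr
  have hradius : (‖x₀‖₊ : ENNReal) ≤ p.radius := by
    refine p.le_radius_of_tendsto (l := 0) ?_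
    simpa [p, FormalMultilinearSeries.ofScalars_norm, norm_mul, norm_pow] using
      (hzero x₀ hx₀r).summable.tendsto_atTop_zero.norm
  have hball : HasFPowerSeriesOnBall 0 p 0 ‖x₀‖₊ := by
    refine ⟨hradius, by simpa using hx₀, fun {y} hy => ?_⟩
    have hy : ‖y‖ < r := by
      have : ‖y‖₊ < ‖x₀‖₊ := by exact_mod_cast mem_eball_zero_iff.1 hy
      exact (NNReal.coe_lt_coe.2 this).trans hx₀r
    simpa [p, FormalMultilinearSeries.ofScalars_apply_eq, mul_comm] using hzero y hy
  exact sub_eq_zero.1 ((FormalMultilinearSeries.ofScalars_series_eq_zero 𝕜).1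
    hball.hasFPowerSeriesAt.eq_zero)

lemma summable_quarter_pow_div_add_eleven :
    Summable fun m : ℕ => (1 / 4 : ℝ) ^ m / (m + 11) :=
  (summable_geometric_of_lt_one (by norm_num) (by norm_num)).of_nonneg_of_le
    (fun _ => by positivity) fun m =>
      div_le_self (by positivity) (by linarith [m.cast_nonneg (α := ℝ)])

lemma tsum_quarter_pow_div_add_eleven_le : ∑' m : ℕ, (1 / 4 : ℝ) ^ m / (m + 11) ≤ 47 / 396 := by
  rw [summable_quarter_pow_div_add_eleven.tsum_eq_zero_add]
  have hgeom : HasSum (fun m : ℕ => (1 / 4 : ℝ) ^ (m + 1) / 12) (1 / 36) := by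
    have h := (hasSum_geometric_of_lt_one (r := (1 / 4 : ℝ)) (by norm_num) (by norm_num)).mul_left
      (1 / 48)
    rw [show (1 / 36 : ℝ) = 1 / 48 * (1 - 1 / 4)⁻¹ by norm_num]
    exact h.congr_fun fun m => by ring
  have htail := Summable.tsum_le_tsum (fun m => ?_)
    ((summable_nat_add_iff 1).2 summable_quarter_pow_div_add_eleven) hgeom.summable
  · rw [hgeom.tsum_eq] at htail
    norm_num at htail ⊢
    linarith
  · gcongr
    push_cast
    linarith [m.cast_nonneg (α := ℝ)]

lemma log_sin_pi_mul_div_sub_taylor_mem {u : ℝ} (hu : |u| ≤ 1 / 2) :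
    log (sin (π * u) / (π * u)) -
        ∑ m ∈ range 10, -(zetaNat (2 * (m + 1)) / (m + 1)) * u ^ (2 * (m + 1)) ∈
      Set.Icc (-(47 / 396 * (1 + (1 / 2) ^ 20) * u ^ 22)) 0 := by
  set b : ℕ → ℝ := fun m => -(zetaNat (2 * (m + 1)) / (m + 1)) * u ^ (2 * (m + 1))
  have htail :=
    (hasSum_nat_add_iff' (f := b) 10).2 (hasSum_log_sin_pi_mul_div (by linarith : |u| < 1))
  have hu2 : u ^ 2 ≤ 1 / 4 := by nlinarith [sq_abs u, abs_nonneg u]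
  have hb : ∀ m, b (m + 10) = -(zetaNat (2 * (m + 11)) / (m + 11) * (u ^ 22 * (u ^ 2) ^ m)) := by
    intro m
    simp only [b]
    push_cast
    ring
  refine ⟨?_, hasSum_le (fun m => ?_) htail hasSum_zero⟩
  · have hmaj := summable_quarter_pow_div_add_eleven.hasSum.mul_left
      (-((1 + (1 / 2) ^ 20) * u ^ 22))
    refine le_trans ?_ (hasSum_le (fun m => ?_) hmaj htail)
    · nlinarith [tsum_quarter_pow_div_add_eleven_le, pow_nonneg (sq_nonneg u) 11]
    · rw [hb, neg_mul, neg_le_neg_iff]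
      have hζ : zetaNat (2 * (m + 11)) ≤ 1 + (1 / 2) ^ 20 :=
        (zetaNat_le (by omega)).trans
          (add_le_add_right (pow_le_pow_of_le_one (a := (1 / 2 : ℝ)) (by norm_num) (by norm_num)
            (show 20 ≤ 2 * (m + 11) - 2 by omega)) 1)
      calc zetaNat (2 * (m + 11)) / (m + 11) * (u ^ 22 * (u ^ 2) ^ m)
          ≤ (1 + (1 / 2) ^ 20) / (m + 11) * (u ^ 22 * (1 / 4) ^ m) := by
            gcongr
        _ = (1 + (1 / 2) ^ 20) * u ^ 22 * ((1 / 4) ^ m / (m + 11)) := by ring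
  · rw [hb, neg_nonpos]
    have := zetaNat_nonneg (2 * (m + 11))
    positivity

theorem stmt_19_general (a : ℕ → ℝ)
    (ha : ∀ x : ℝ, |x| < π → HasSum (fun k : ℕ => a k * x ^ k) (Real.log (Real.sin x / x)))
    (x : ℝ) (hx0 : 0 < x) (hx : x ≤ π / 2) :
    Real.log (Real.sin x / x) - (∑ k ∈ Finset.Icc 1 10, a (2 * k) * x ^ (2 * k)) ≤ 0 ∧
      -(1.4e-12) * x ^ 22 ≤
        Real.log (Real.sin x / x) - ∑ k ∈ Finset.Icc 1 10, a (2 * k) * x ^ (2 * k) := by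
  obtain rfl : a = logSincCoeff :=
    eq_of_forall_hasSum_mul_pow pi_pos ha fun y hy => hasSum_logSincCoeff hy
  have htaylor : ∑ k ∈ Icc 1 10, logSincCoeff (2 * k) * x ^ (2 * k) =
      ∑ m ∈ range 10, -(zetaNat (2 * (m + 1)) / (m + 1)) * (x / π) ^ (2 * (m + 1)) := by
    rw [← Finset.Ico_add_one_right_eq_Icc, sum_Ico_eq_sum_range]
    exact sum_congr rfl fun m _ => by rw [add_comm 1 m, logSincCoeff_two_mul_succ_mul_pow]
  have hu : |x / π| ≤ 1 / 2 := by
    rw [abs_of_pos (div_pos hx0 pi_pos), div_le_iff₀ pi_pos]; linarith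
  obtain ⟨hlow, hup⟩ := log_sin_pi_mul_div_sub_taylor_mem hu
  rw [mul_div_cancel₀ x pi_ne_zero] at hlow hup
  rw [htaylor]
  refine ⟨hup, le_trans ?_ hlow⟩
  have hπ : 3.141592 ^ 22 ≤ π ^ 22 := pow_le_pow_left₀ (by norm_num) pi_gt_d6.le 22
  have hconst : 47 / 396 * (1 + (1 / 2) ^ 20) * (x / π) ^ 22 ≤ 1.4e-12 * x ^ 22 := by
    rw [div_pow x π, mul_div_assoc', div_le_iff₀ (by positivity)]
    calc 47 / 396 * (1 + (1 / 2) ^ 20) * x ^ 22 ≤ 1.4e-12 * 3.141592 ^ 22 * x ^ 22 := by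
          exact mul_le_mul_of_nonneg_right (by norm_num) (by positivity)
      _ ≤ 1.4e-12 * x ^ 22 * π ^ 22 := by nlinarith [pow_pos hx0 22]
  linarith

theorem stmt_19 (a : ℕ → ℝ) (ha0 : a 0 = 0)
    (ha : ∀ x : ℝ, |x| < π → HasSum (fun k : ℕ => a k * x ^ k) (Real.log (Real.sin x / x)))
    (n : ℕ) (hn : 0 < n) (x : ℝ) (hx0 : 0 < x) (hx : x ≤ π / 2) :
    Real.log (Real.sin x / x) - (∑ k ∈ Finset.Icc 1 10, a (2 * k) * x ^ (2 * k)) ≤ 0 ∧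
      -(1.4e-12) * x ^ 22 ≤
        Real.log (Real.sin x / x) - ∑ k ∈ Finset.Icc 1 10, a (2 * k) * x ^ (2 * k) :=
  stmt_19_general a ha x hx0 hx
end
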